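/- arXiv:1605.07727 — 6 statements merged into one kernel-verified Lean document; each statement's English description precedes it below -/
import Mathlib

section
/- Let Δ be a simplicial forest and let W be any subset of the vertex set V(Δ). Then the simplicial complex whose facets are the minimal elements under inclusion of the nonempty sets {F ∩ W : F a facet of Δ} is again a simplicial forest. (This is the combinatorial content of the statement that the localization of the facet ideal of a simplicial forest at any prime ideal is again the facet ideal of a simplicial forest.) -/
/-! Every subcollection of `{F ∩ W : F ∈ Δ}` is the image of a subcollection of `Δ` on which
`· ∩ W` is injective, and intersecting with `W` carries a leaf of the latter to a leaf of the
former. The localization is a subcollection of `{F ∩ W : F ∈ Δ}`. -/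

namespace FacetPaper

variable (k : Type*) [Field k]
variable {V : Type*} [DecidableEq V] [LinearOrder V]

/-- The vertex set of a simplicial complex given by its (finite) set of facets. -/
def vertexSet (Δ : Finset (Finset V)) : Finset V := Δ.sup id

/-- The induced subcollection `Δ_[u]`: the complex whose facets are the facets
of `Δ` contained in `u`. -/
def induced (Δ : Finset (Finset V)) (u : Finset V) : Finset (Finset V) :=
  Δ.filter (fun F => F ⊆ u)

/-- `F` is a leaf of the complex with facet set `Δ`. -/
def IsLeaf (Δ : Finset (Finset V)) (F : Finset V) : Prop :=
  F ∈ Δ ∧ (Δ = {F} ∨ ∃ G ∈ Δ, G ≠ F ∧ ∀ H ∈ Δ, H ≠ F → F ∩ H ⊆ G)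

/-- A simplicial forest: every nonempty subcollection has a leaf. -/
def IsForest (Δ : Finset (Finset V)) : Prop :=
  ∀ Γ ⊆ Δ, Γ.Nonempty → ∃ F, IsLeaf Γ F

/-- The facet `F` has a free vertex: a vertex of `F` lying in no other facet. -/
def HasFreeVertex (Δ : Finset (Finset V)) (F : Finset V) : Prop :=
  ∃ x ∈ F, ∀ G ∈ Δ, x ∈ G → G = F

/-- Minimal elements, under inclusion, of a finite family of finite sets. -/
def minimals (S : Finset (Finset V)) : Finset (Finset V) :=
  S.filter (fun A => ∀ B ∈ S, B ⊆ A → B = A)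

/-- The localization (restriction) `Δ_W`: minimal elements of the nonempty
intersections of facets with `W`. -/
def localization (Δ : Finset (Finset V)) (W : Finset V) : Finset (Finset V) :=
  minimals ((Δ.image (fun F => F ∩ W)).filter (fun A => A.Nonempty))

/-- `Γ = (Δ ∖ ⟨F⟩)_{F̄}`: the minimal elements under inclusion of
`{G ∖ F : G a facet of Δ, G ≠ F}`. -/
def gammaOf (Δ : Finset (Finset V)) (F : Finset V) : Finset (Finset V) :=
  minimals ((Δ.erase F).image (fun G => G \ F))

/-- `Δ_[u]` and `Δ_[v]` are complements in `Δ`: `u`, `v` are proper subsets of the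
vertex set, `u ∪ v = V(Δ)`, and `Δ_[u]`, `Δ_[v]` have no facet in common. -/
def Complements (Δ : Finset (Finset V)) (u v : Finset V) : Prop :=
  u ⊂ vertexSet Δ ∧ v ⊂ vertexSet Δ ∧ u ∪ v = vertexSet Δ ∧
    ∀ F ∈ Δ, ¬ (F ∈ induced Δ u ∧ F ∈ induced Δ v)

/-! ### Graded Betti numbers via the Taylor complex

For a square-free monomial ideal `I` with facet complex `Δ` (facets = supports of
the minimal monomial generators), the Taylor complex is a graded free resolution of
`S/I`, so `Tor_i^S(S/I,k)` is the `i`-th homology of the Taylor complex tensored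
with `k`.  The resulting complex of `k`-vector spaces has basis the subsets `σ` of
the set of generators, a basis element `σ` sitting in homological degree `|σ|` and
multidegree `lcm σ` (= the union of the supports), with differential
`∂σ = Σ_{F ∈ σ, lcm(σ∖F) = lcm σ} ± (σ ∖ F)`.  The multigraded Betti number
`β_{i,u}(S/I) = dim_k Tor_i(S/I,k)_u` is the dimension of the homology of the
multidegree-`u` strand in homological degree `i`. -/

/-- The sign `(-1)^{position of F in σ}` (using the colexicographic order). -/
noncomputable def taylorSign (σ : Finset (Finset V)) (F : Finset V) : k :=
  (-1 : k) ^ (σ.filter (fun G => toColex G < toColex F)).card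

/-- The Taylor differential (tensored with `k`) on a basis element. -/
noncomputable def taylorD (σ : Finset (Finset V)) : Finset (Finset V) →₀ k :=
  ∑ F ∈ σ, if (σ.erase F).sup id = σ.sup id then
    taylorSign k σ F • Finsupp.single (σ.erase F) (1 : k) else 0

/-- The Taylor differential as a linear map. -/
noncomputable def taylorDiff : (Finset (Finset V) →₀ k) →ₗ[k] (Finset (Finset V) →₀ k) :=
  Finsupp.lsum k (fun σ => LinearMap.toSpanSingleton k _ (taylorD k σ))

/-- The strand of the Taylor complex (tensored with `k`) of the complex `Δ` in
homological degree `i` and multidegree `u`. -/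
noncomputable def strand (Δ : Finset (Finset V)) (i : ℕ) (u : Finset V) :
    Submodule k (Finset (Finset V) →₀ k) :=
  Submodule.span k
    {x | ∃ σ : Finset (Finset V), σ ⊆ Δ ∧ σ.card = i ∧ σ.sup id = u ∧
      x = Finsupp.single σ (1 : k)}

/-- Cycles of the multidegree-`u` strand in homological degree `i`. -/
noncomputable def taylorCycles (Δ : Finset (Finset V)) (i : ℕ) (u : Finset V) :
    Submodule k (Finset (Finset V) →₀ k) :=
  LinearMap.ker (taylorDiff k) ⊓ strand k Δ i u

/-- Boundaries of the multidegree-`u` strand in homological degree `i`. -/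
noncomputable def taylorBoundaries (Δ : Finset (Finset V)) (i : ℕ) (u : Finset V) :
    Submodule k (Finset (Finset V) →₀ k) :=
  Submodule.map (taylorDiff k) (strand k Δ (i + 1) u)

/-- The multigraded Betti number `β_{i,u}(Δ) = dim_k Tor_i^S(S/F(Δ), k)_u`,
computed as the homology (dimension of cycles minus dimension of boundaries; all
these spaces are finite dimensional and the boundaries lie inside the cycles) of
the multidegree-`u` strand of the Taylor complex tensored with `k`. -/
noncomputable def multigradedBetti (Δ : Finset (Finset V)) (i : ℕ) (u : Finset V) : ℕ :=
  Module.finrank k ↥(taylorCycles k Δ i u) -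
    Module.finrank k ↥(taylorBoundaries k Δ i u ⊓ taylorCycles k Δ i u)

/-- The graded Betti number `β_{i,j}(Δ) = dim_k Tor_i^S(S/F(Δ), k)_j`, the sum of
the multigraded Betti numbers over the square-free multidegrees of degree `j`
supported on the vertices of `Δ`. -/
noncomputable def gradedBetti (Δ : Finset (Finset V)) (i j : ℕ) : ℕ :=
  ∑ u ∈ (vertexSet Δ).powersetCard j, multigradedBetti k Δ i u

/-- `t_c(I)`:  the largest internal degree `j` with `β_{c,j} ≠ 0`. -/
noncomputable def tdeg (Δ : Finset (Finset V)) (c : ℕ) : ℕ :=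
  sSup {j | gradedBetti k Δ c j ≠ 0}

/-- The projective dimension of `S/F(Δ)`: the largest homological degree with a
nonvanishing Betti number. -/
noncomputable def projDim (Δ : Finset (Finset V)) : ℕ :=
  sSup {c | ∃ j, gradedBetti k Δ c j ≠ 0}

/-- Membership in the lcm lattice `LCM(I)`: `m_u` is an lcm of a set of generators. -/
def MemLcmLattice (Δ : Finset (Finset V)) (u : Finset V) : Prop :=
  ∃ A ⊆ Δ, u = A.sup id

/-- `m_u` and `m_v` are complements in the lcm lattice: their lcm is `1̂` (the lcm of
all the generators) and their gcd `m_{u ∩ v}` is not in the ideal (no generator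
divides it). -/
def LcmComplements (Δ : Finset (Finset V)) (u v : Finset V) : Prop :=
  u ∪ v = vertexSet Δ ∧ ¬ ∃ F ∈ Δ, F ⊆ u ∩ v

lemma _root_.Finset.exists_subset_injOn_image_eq {α β : Type*} [DecidableEq α] [DecidableEq β]
    {f : α → β} {s : Finset α} {t : Finset β} (ht : t ⊆ s.image f) :
    ∃ u ⊆ s, Set.InjOn f u ∧ u.image f = t := by
  have hpre : ∀ b : t, ∃ a ∈ s, f a = b := fun b => Finset.mem_image.mp (ht b.2)
  choose g hgs hfg using hpre
  refine ⟨t.attach.image g, ?_, ?_, ?_⟩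
  · simpa [Finset.image_subset_iff] using hgs
  · simp only [Finset.coe_image, Set.InjOn, Set.mem_image, Finset.mem_coe]
    rintro _ ⟨b, -, rfl⟩ _ ⟨b', -, rfl⟩ h
    rw [hfg, hfg, ← Subtype.ext_iff] at h
    rw [h]
  · rw [Finset.image_image, show f ∘ g = Subtype.val from funext hfg, Finset.attach_image_val]

omit [LinearOrder V] in
lemma IsLeaf.image_inter {Γ : Finset (Finset V)} {F : Finset V} (W : Finset V)
    (hF : IsLeaf Γ F) (hinj : Set.InjOn (· ∩ W) Γ) :
    IsLeaf (Γ.image (· ∩ W)) (F ∩ W) := by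
  obtain ⟨hFΓ, hsingle | ⟨G, hGΓ, hGF, hjoint⟩⟩ := hF
  · exact ⟨Finset.mem_image_of_mem _ hFΓ, .inl (by simp [hsingle])⟩
  refine ⟨Finset.mem_image_of_mem _ hFΓ, .inr ⟨G ∩ W, Finset.mem_image_of_mem _ hGΓ,
    fun h => hGF (hinj hGΓ hFΓ h), ?_⟩⟩
  simp only [Finset.mem_image, forall_exists_index, and_imp]
  rintro _ H hHΓ rfl hHF
  have hHF' : H ≠ F := by rintro rfl; exact hHF rfl
  intro x hx
  simp only [Finset.mem_inter] at hx ⊢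
  exact ⟨hjoint H hHΓ hHF' (Finset.mem_inter.mpr ⟨hx.1.1, hx.2.1⟩), hx.1.2⟩

omit [LinearOrder V] in
lemma IsForest.mono {Δ Γ : Finset (Finset V)} (hΔ : IsForest Δ) (hΓ : Γ ⊆ Δ) : IsForest Γ :=
  fun Γ' hΓ' hne => hΔ Γ' (hΓ'.trans hΓ) hne

omit [LinearOrder V] in
lemma IsForest.image_inter {Δ : Finset (Finset V)} (hΔ : IsForest Δ) (W : Finset V) :
    IsForest (Δ.image (· ∩ W)) := by
  intro Γ hΓ hne
  obtain ⟨Γ', hΓ'Δ, hinj, rfl⟩ := Finset.exists_subset_injOn_image_eq hΓ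
  obtain ⟨F, hF⟩ := hΔ Γ' hΓ'Δ (Finset.image_nonempty.mp hne)
  exact ⟨F ∩ W, hF.image_inter W hinj⟩

omit [LinearOrder V] in
lemma localization_subset_image_inter (Δ : Finset (Finset V)) (W : Finset V) :
    localization Δ W ⊆ Δ.image (· ∩ W) :=
  (Finset.filter_subset _ _).trans (Finset.filter_subset _ _)

theorem isForest_localization_general
    (Δ : Finset (Finset V))
    (hforest : IsForest Δ) (W : Finset V) :
    IsForest (localization Δ W) :=
  (hforest.image_inter W).mono (localization_subset_image_inter Δ W)

/-- Localization of a forest is a forest.  If `Δ` is a simplicial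
forest and `W ⊆ V(Δ)`, then the complex whose facets are the minimal elements under
inclusion of the nonempty sets `{F ∩ W : F a facet of Δ}` is again a simplicial
forest. -/
theorem isForest_localization
    (Δ : Finset (Finset V)) (hfacet : IsAntichain (· ⊆ ·) (Δ : Set (Finset V)))
    (hforest : IsForest Δ) (W : Finset V) (hW : W ⊆ vertexSet Δ) :
    IsForest (localization Δ W) :=
  isForest_localization_general Δ hforest W

end FacetPaper
end

section
/- Let Δ be a simplicial complex on n vertices with more than one facet, let F be a facet of Δ having a free vertex, and let Γ = (Δ∖⟨F⟩)_{F̄} be the simplicial complex whose facets are the minimal elements under inclusion of {G∖F : G a facet of Δ, G ≠ F}. Then for every i ≥ 1, β_{i,n}(Δ) = β_{i−1, n−|F|}(Γ). -/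
/-!
Every Taylor symbol `σ ⊆ Δ` of multidegree `V(Δ)` contains `F`, the only facet through the free
vertex. Hence `σ ↦ σ ∖ {F}` identifies the multidegree-`V(Δ)` strand of the Taylor complex of `Δ`,
in homological degree `i`, with the multidegree-`V(Δ) ∖ F` strand, in degree `i - 1`, of the Taylor
complex of the generators `G ∖ F`, `G ≠ F`. In a Taylor complex, a generator whose support contains
the support of another generator can be deleted without changing homology (there is an explicit
contracting homotopy); deleting the non-minimal `G ∖ F` leaves the Taylor complex of `Γ`. In degrees
`n` and `n - |F|` the graded Betti numbers are the multigraded ones of full support, and the one of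
`Γ` vanishes when `V(Γ) ⊊ V(Δ) ∖ F`.
-/

namespace FacetPaper

variable (k : Type*) [Field k]
variable {V : Type*} [DecidableEq V] [LinearOrder V]

section HomologyFinrank

open Module Submodule

variable {k} {E E' : Type*} [AddCommGroup E] [Module k E] [AddCommGroup E'] [Module k E']

/-- `dim (ker d ⊓ A) / (d B ⊓ ker d ⊓ A)`: the homology at `A` of a complex whose next term is
`B`. -/
noncomputable def homologyFinrank (d : E →ₗ[k] E) (A B : Submodule k E) : ℕ :=
  finrank k ↥(LinearMap.ker d ⊓ A) - finrank k ↥(B.map d ⊓ (LinearMap.ker d ⊓ A))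

theorem homologyFinrank_congr {d d' : E →ₗ[k] E} {A B : Submodule k E}
    (hA : ∀ v ∈ A, d v = d' v) (hB : ∀ v ∈ B, d v = d' v) :
    homologyFinrank d A B = homologyFinrank d' A B := by
  have hZ : LinearMap.ker d ⊓ A = LinearMap.ker d' ⊓ A := by
    ext v
    simp only [mem_inf, LinearMap.mem_ker]
    exact ⟨fun ⟨h, hv⟩ => ⟨hA v hv ▸ h, hv⟩, fun ⟨h, hv⟩ => ⟨(hA v hv).symm ▸ h, hv⟩⟩
  have hB' : B.map d = B.map d' := by
    ext v
    exact ⟨fun ⟨w, hw, h⟩ => ⟨w, hw, (hB w hw) ▸ h⟩, fun ⟨w, hw, h⟩ => ⟨w, hw, (hB w hw).symm ▸ h⟩⟩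
  rw [homologyFinrank, homologyFinrank, hZ, hB']

theorem finrank_map_of_injOn {f : E →ₗ[k] E'} {p : Submodule k E} (h : Set.InjOn f p) :
    finrank k ↥(p.map f) = finrank k p := by
  rw [← LinearMap.range_domRestrict, LinearMap.finrank_range_of_inj]
  exact fun a b hab => Subtype.ext (h a.2 b.2 hab)

theorem finrank_eq_add_finrank_ker_inf_of_retraction {r : E →ₗ[k] E} {P P' : Submodule k E}
    [FiniteDimensional k P] (hle : P' ≤ P) (hmaps : ∀ v ∈ P, r v ∈ P')
    (hfix : ∀ v ∈ P', r v = v) :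
    finrank k P = finrank k P' + finrank k ↥(LinearMap.ker r ⊓ P) := by
  have hrange : LinearMap.range (r.domRestrict P) = P' := by
    rw [LinearMap.range_domRestrict]
    exact le_antisymm (map_le_iff_le_comap.mpr hmaps) fun v hv => ⟨v, hle hv, hfix v hv⟩
  have hker : finrank k ↥(LinearMap.ker (r.domRestrict P)) =
      finrank k ↥(LinearMap.ker r ⊓ P) := by
    have : (LinearMap.ker r).comap P.subtype = (LinearMap.ker r ⊓ P).comap P.subtype := by
      ext v
      simp
    rw [LinearMap.ker_domRestrict, this]
    exact (comapSubtypeEquivOfLe inf_le_right).finrank_eq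
  rw [← LinearMap.finrank_range_add_finrank_ker (r.domRestrict P), hrange, hker]

theorem homologyFinrank_eq_of_homotopy {d h : E →ₗ[k] E} {A B A' B' : Submodule k E}
    [FiniteDimensional k A] (hdd : ∀ v, d (d v) = 0) (hA : A' ≤ A) (hB : B' ≤ B)
    (hrA : ∀ v ∈ A, v - d (h v) - h (d v) ∈ A') (hrB : ∀ v ∈ B, v - d (h v) - h (d v) ∈ B')
    (hh : ∀ v ∈ A', h v = 0) (hhA : ∀ v ∈ A, h v ∈ B) :
    homologyFinrank d A B = homologyFinrank d A' B' := by
  set r : E →ₗ[k] E := LinearMap.id - d ∘ₗ h - h ∘ₗ d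
  have hr : ∀ v, r v = v - d (h v) - h (d v) := fun v => rfl
  have hr_cycle : ∀ v ∈ LinearMap.ker d, r v = v - d (h v) := fun v hv => by
    rw [hr, LinearMap.mem_ker.mp hv, map_zero, sub_zero]
  have hrZ : ∀ v ∈ LinearMap.ker d ⊓ A, r v ∈ LinearMap.ker d ⊓ A' := fun v ⟨hvd, hvA⟩ => by
    refine ⟨?_, hrA v hvA⟩
    rw [SetLike.mem_coe, LinearMap.mem_ker, hr_cycle v hvd, map_sub, hdd, LinearMap.mem_ker.mp hvd,
      sub_zero]
  have hrZ' : ∀ v ∈ LinearMap.ker d ⊓ A', r v = v := fun v ⟨hvd, hvA'⟩ => by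
    rw [hr_cycle v hvd, hh v hvA', map_zero, sub_zero]
  have hrBd : ∀ v ∈ B.map d ⊓ (LinearMap.ker d ⊓ A), r v ∈ B'.map d ⊓ (LinearMap.ker d ⊓ A') := by
    rintro _ ⟨⟨w, hwB, rfl⟩, hvZ⟩
    refine ⟨⟨r w, hrB w hwB, ?_⟩, hrZ _ hvZ⟩
    simp only [hr, map_sub, hdd, map_zero, sub_zero]
  -- a cycle `v ∈ A` with `r v = 0` is the boundary `d (h v)` of `h v ∈ B`
  have hker : LinearMap.ker r ⊓ (B.map d ⊓ (LinearMap.ker d ⊓ A)) =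
      LinearMap.ker r ⊓ (LinearMap.ker d ⊓ A) := by
    refine le_antisymm (inf_le_inf_left _ inf_le_right) fun v ⟨hvr, hvZ⟩ => ⟨hvr, ?_, hvZ⟩
    have : v = d (h v) := by
      rw [← sub_eq_zero, ← hr_cycle v hvZ.1]
      exact hvr
    exact ⟨h v, hhA v hvZ.2, this.symm⟩
  have : FiniteDimensional k ↥(LinearMap.ker d ⊓ A) := finiteDimensional_of_le inf_le_right
  have : FiniteDimensional k ↥(B.map d ⊓ (LinearMap.ker d ⊓ A)) :=
    finiteDimensional_of_le inf_le_right
  rw [homologyFinrank, homologyFinrank,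
    finrank_eq_add_finrank_ker_inf_of_retraction (inf_le_inf_left _ hA) hrZ hrZ',
    finrank_eq_add_finrank_ker_inf_of_retraction (inf_le_inf (map_mono hB) (inf_le_inf_left _ hA))
      hrBd fun v hv => hrZ' v hv.2, hker]
  omega

theorem homologyFinrank_eq_of_injOn {d : E' →ₗ[k] E'} {d' : E →ₗ[k] E} {Φ : E →ₗ[k] E'}
    {P A' B' : Submodule k E} {A B : Submodule k E'} [FiniteDimensional k A']
    (hdd' : ∀ v, d' (d' v) = 0) (hdP : P.map d' ≤ P) (hΦ : Set.InjOn Φ P)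
    (hcomm : ∀ v ∈ P, d (Φ v) = Φ (d' v)) (hA'P : A' ≤ P) (hB'P : B' ≤ P) (hd' : B'.map d' ≤ A')
    (hA : A'.map Φ = A) (hB : B'.map Φ = B) :
    homologyFinrank d A B = homologyFinrank d' A' B' := by
  have hZ : (LinearMap.ker d' ⊓ A').map Φ = LinearMap.ker d ⊓ A := by
    refine le_antisymm ?_ fun x ⟨hx, hxA⟩ => ?_
    · rintro _ ⟨v, ⟨hv, hvA'⟩, rfl⟩
      refine ⟨?_, hA ▸ mem_map_of_mem hvA'⟩
      rw [SetLike.mem_coe, LinearMap.mem_ker, hcomm v (hA'P hvA'), LinearMap.mem_ker.mp hv,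
        map_zero]
    · rw [← hA] at hxA
      obtain ⟨v, hvA', rfl⟩ := hxA
      refine ⟨v, ⟨?_, hvA'⟩, rfl⟩
      have hvP := hA'P hvA'
      refine hΦ (hdP (mem_map_of_mem hvP)) P.zero_mem ?_
      rw [map_zero, ← hcomm v hvP]
      exact hx
  have hBd : (B'.map d' ⊓ (LinearMap.ker d' ⊓ A')).map Φ = B.map d ⊓ (LinearMap.ker d ⊓ A) := by
    refine le_antisymm ?_ fun x ⟨⟨w, hwB, hw⟩, hxZ⟩ => ?_
    · rintro _ ⟨v, ⟨⟨w, hwB', rfl⟩, hvZ⟩, rfl⟩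
      refine ⟨⟨Φ w, hB ▸ mem_map_of_mem hwB', hcomm w (hB'P hwB')⟩, hZ ▸ mem_map_of_mem hvZ⟩
    · rw [← hB] at hwB
      obtain ⟨w', hw'B', rfl⟩ := hwB
      refine ⟨d' w', ⟨mem_map_of_mem hw'B', ?_, hd' (mem_map_of_mem hw'B')⟩, ?_⟩
      · exact LinearMap.mem_ker.mpr (hdd' w')
      · rw [← hw, hcomm w' (hB'P hw'B')]
  rw [homologyFinrank, homologyFinrank, ← hBd, ← hZ,
    finrank_map_of_injOn (hΦ.mono fun v hv => hA'P (mem_inf.mp hv).2),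
    finrank_map_of_injOn (hΦ.mono fun v hv => hA'P (mem_inf.mp (mem_inf.mp hv).2).2)]

end HomologyFinrank

section Signs

theorem neg_one_pow_card_filter_erase {R α : Type*} [Ring R] [DecidableEq α] (p : α → Prop)
    [DecidablePred p] {τ : Finset α} {G : α} (hG : G ∈ τ) :
    (-1 : R) ^ ((τ.erase G).filter p).card =
      (if p G then -1 else 1) * (-1) ^ (τ.filter p).card := by
  rw [Finset.filter_erase]
  split_ifs with h
  · rw [← Finset.card_erase_add_one (Finset.mem_filter.mpr ⟨hG, h⟩), pow_succ]
    simp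
  · rw [Finset.erase_eq_of_notMem fun hc => h (Finset.mem_filter.mp hc).2, one_mul]

variable {k}

theorem taylorSign_erase {τ : Finset (Finset V)} {G : Finset V} (hG : G ∈ τ) (H : Finset V) :
    taylorSign k (τ.erase G) H = (if toColex G < toColex H then -1 else 1) * taylorSign k τ H :=
  neg_one_pow_card_filter_erase _ hG

theorem taylorSign_mul_self (σ : Finset (Finset V)) (F : Finset V) :
    taylorSign k σ F * taylorSign k σ F = 1 := by
  rw [taylorSign, ← mul_pow]
  norm_num

theorem ite_toColex_lt_mul_ite_toColex_lt {G H : Finset V} (h : G ≠ H) :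
    (if toColex G < toColex H then (-1 : k) else 1) *
      (if toColex H < toColex G then (-1 : k) else 1) = -1 := by
  rcases lt_trichotomy (toColex G) (toColex H) with hlt | heq | hgt
  · rw [if_pos hlt, if_neg hlt.asymm, mul_one]
  · exact absurd (toColex_inj.mp heq) h
  · rw [if_neg hgt.asymm, if_pos hgt, one_mul]

theorem taylorSign_mul_taylorSign_erase_swap {σ : Finset (Finset V)} {G H : Finset V}
    (hG : G ∈ σ) (hH : H ∈ σ) (hGH : G ≠ H) :
    taylorSign k σ H * taylorSign k (σ.erase H) G =
      -(taylorSign k σ G * taylorSign k (σ.erase G) H) := by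
  rw [taylorSign_erase hH, taylorSign_erase hG]
  rcases lt_trichotomy (toColex G) (toColex H) with hlt | heq | hgt
  · rw [if_pos hlt, if_neg hlt.asymm]; ring
  · exact absurd (toColex_inj.mp heq) hGH
  · rw [if_neg hgt.asymm, if_pos hgt]; ring

end Signs

section TaylorWith

/-- Generators are indexed by finsets `G` and have support `s G`, so that distinct generators may
share a support; `taylorD = taylorDWith id`. -/
noncomputable def taylorDTerm (s : Finset V → Finset V) (σ : Finset (Finset V)) (G : Finset V) :
    Finset (Finset V) →₀ k :=
  if (σ.erase G).sup s = σ.sup s then taylorSign k σ G • Finsupp.single (σ.erase G) (1 : k) else 0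

noncomputable def taylorDWith (s : Finset V → Finset V) (σ : Finset (Finset V)) :
    Finset (Finset V) →₀ k :=
  ∑ G ∈ σ, taylorDTerm k s σ G

noncomputable def taylorDiffWith (s : Finset V → Finset V) :
    (Finset (Finset V) →₀ k) →ₗ[k] (Finset (Finset V) →₀ k) :=
  Finsupp.lsum k fun σ => LinearMap.toSpanSingleton k _ (taylorDWith k s σ)

noncomputable def strandWith (s : Finset V → Finset V) (S : Finset (Finset V)) (i : ℕ)
    (u : Finset V) : Submodule k (Finset (Finset V) →₀ k) :=
  Submodule.span k
    {x | ∃ σ : Finset (Finset V), σ ⊆ S ∧ σ.card = i ∧ σ.sup s = u ∧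
      x = Finsupp.single σ (1 : k)}

noncomputable def multigradedBettiWith (s : Finset V → Finset V) (S : Finset (Finset V)) (i : ℕ)
    (u : Finset V) : ℕ :=
  homologyFinrank (taylorDiffWith k s) (strandWith k s S i u) (strandWith k s S (i + 1) u)

theorem multigradedBetti_eq_multigradedBettiWith (Δ : Finset (Finset V)) (i : ℕ) (u : Finset V) :
    multigradedBetti k Δ i u = multigradedBettiWith k id Δ i u :=
  rfl

end TaylorWith

section Strand

variable {k} {α : Type*} [DecidableEq α] {s : Finset α → Finset α} {S : Finset (Finset α)} {i : ℕ}
  {u : Finset α}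

theorem single_mem_strandWith {σ : Finset (Finset α)} (hσ : σ ⊆ S) (hcard : σ.card = i)
    (hsup : σ.sup s = u) : Finsupp.single σ (1 : k) ∈ strandWith k s S i u :=
  Submodule.subset_span ⟨σ, hσ, hcard, hsup, rfl⟩

theorem strandWith_le {p : Submodule k (Finset (Finset α) →₀ k)}
    (h : ∀ σ ⊆ S, σ.card = i → σ.sup s = u → Finsupp.single σ (1 : k) ∈ p) :
    strandWith k s S i u ≤ p := by
  rw [strandWith, Submodule.span_le]
  rintro _ ⟨σ, hσ, hcard, hsup, rfl⟩
  exact h σ hσ hcard hsup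

theorem strandWith_mono {S' : Finset (Finset α)} (h : S' ⊆ S) :
    strandWith k s S' i u ≤ strandWith k s S i u :=
  strandWith_le fun _ hσ hcard hsup => single_mem_strandWith (hσ.trans h) hcard hsup

theorem strandWith_le_supported :
    strandWith k s S i u ≤ Finsupp.supported k k {σ | σ ⊆ S} :=
  strandWith_le fun _ hσ _ _ => Finsupp.single_mem_supported k _ hσ

instance (s : Finset α → Finset α) (S : Finset (Finset α)) (i : ℕ) (u : Finset α) :
    FiniteDimensional k (strandWith k s S i u) :=
  FiniteDimensional.span_of_finite k <| ((S.powerset.finite_toSet.image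
    fun σ => Finsupp.single σ (1 : k)).subset fun _ ⟨σ, hσ, _, _, hx⟩ =>
      ⟨σ, Finset.mem_powerset.mpr hσ, hx.symm⟩)

end Strand

section TaylorDiff

variable {k} {s : Finset V → Finset V}

theorem taylorDiffWith_single (σ : Finset (Finset V)) (c : k) :
    taylorDiffWith k s (Finsupp.single σ c) = c • taylorDWith k s σ := by
  simp [taylorDiffWith, LinearMap.toSpanSingleton_apply]

theorem sum_sum_erase_eq_zero {α M : Type*} [DecidableEq α] [AddCommGroup M] (σ : Finset α)
    (f : α → α → M) (hf : ∀ G ∈ σ, ∀ H ∈ σ, G ≠ H → f G H + f H G = 0) :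
    ∑ G ∈ σ, ∑ H ∈ σ.erase G, f G H = 0 := by
  rw [Finset.sum_sigma']
  refine Finset.sum_involution (fun p _ => ⟨p.2, p.1⟩) (fun p hp => ?_) (fun p hp _ => ?_)
    (fun p hp => ?_) (fun _ _ => rfl)
  all_goals obtain ⟨hG, hH⟩ := Finset.mem_sigma.mp hp
  · exact hf _ hG _ (Finset.mem_of_mem_erase hH) (Finset.ne_of_mem_erase hH).symm
  · exact fun h => Finset.ne_of_mem_erase hH (congrArg Sigma.fst h)
  · exact Finset.mem_sigma.mpr ⟨Finset.mem_of_mem_erase hH,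
      Finset.mem_erase.mpr ⟨Finset.ne_of_mem_erase hH |>.symm, hG⟩⟩

theorem sup_erase_erase_eq_iff {α β : Type*} [DecidableEq α] [SemilatticeSup β] [OrderBot β]
    {f : α → β} {σ : Finset α} {a b : α} :
    (σ.erase a).sup f = σ.sup f ∧ ((σ.erase a).erase b).sup f = (σ.erase a).sup f ↔
      ((σ.erase a).erase b).sup f = σ.sup f := by
  refine ⟨fun h => h.2.trans h.1, fun h => ?_⟩
  have hle : ((σ.erase a).erase b).sup f ≤ (σ.erase a).sup f :=
    Finset.sup_mono (Finset.erase_subset _ _)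
  have ha : (σ.erase a).sup f = σ.sup f :=
    le_antisymm (Finset.sup_mono (Finset.erase_subset _ _)) (h ▸ hle)
  exact ⟨ha, h.trans ha.symm⟩

theorem taylorDiffWith_taylorDWith (σ : Finset (Finset V)) :
    taylorDiffWith k s (taylorDWith k s σ) = 0 := by
  have hterm : ∀ G, taylorDiffWith k s (taylorDTerm k s σ G) =
      ∑ H ∈ σ.erase G, if ((σ.erase G).erase H).sup s = σ.sup s then
        (taylorSign k σ G * taylorSign k (σ.erase G) H) •
          Finsupp.single ((σ.erase G).erase H) (1 : k) else 0 := by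
    intro G
    by_cases hG : (σ.erase G).sup s = σ.sup s
    · rw [taylorDTerm, if_pos hG, map_smul, taylorDiffWith_single, one_smul, taylorDWith,
        Finset.smul_sum]
      refine Finset.sum_congr rfl fun H _ => ?_
      rw [taylorDTerm, hG, smul_ite, smul_zero, smul_smul]
    · rw [taylorDTerm, if_neg hG, map_zero]
      exact (Finset.sum_eq_zero fun H _ => if_neg fun h => hG (sup_erase_erase_eq_iff.mpr h).1).symm
  rw [taylorDWith, map_sum, Finset.sum_congr rfl fun G _ => hterm G]
  refine sum_sum_erase_eq_zero σ _ fun G hG H hH hGH => ?_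
  rw [Finset.erase_right_comm (a := H)]
  split_ifs
  · rw [← add_smul, taylorSign_mul_taylorSign_erase_swap hG hH hGH, add_neg_cancel, zero_smul]
  · rw [add_zero]

theorem taylorDiffWith_taylorDiffWith (v : Finset (Finset V) →₀ k) :
    taylorDiffWith k s (taylorDiffWith k s v) = 0 := by
  induction v using Finsupp.induction_linear with
  | zero => simp
  | add v w hv hw => rw [map_add, map_add, hv, hw, add_zero]
  | single σ c => rw [taylorDiffWith_single, map_smul, taylorDiffWith_taylorDWith, smul_zero]

theorem map_taylorDiffWith_supported_le {P : Set (Finset (Finset V))}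
    (hP : ∀ σ ∈ P, ∀ G, σ.erase G ∈ P) :
    (Finsupp.supported k k P).map (taylorDiffWith k s) ≤ Finsupp.supported k k P := by
  rw [Finsupp.supported_eq_span_single, Submodule.map_span, Submodule.span_le]
  rintro _ ⟨_, ⟨σ, hσ, rfl⟩, rfl⟩
  rw [SetLike.mem_coe, taylorDiffWith_single, one_smul, taylorDWith]
  refine Submodule.sum_mem _ fun G _ => ?_
  rw [taylorDTerm]
  split_ifs
  · exact Submodule.smul_mem _ _ (Submodule.subset_span ⟨_, hP σ hσ G, rfl⟩)
  · exact Submodule.zero_mem _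

theorem map_taylorDiffWith_strandWith_le {S : Finset (Finset V)} {i : ℕ} {u : Finset V} :
    (strandWith k s S (i + 1) u).map (taylorDiffWith k s) ≤ strandWith k s S i u := by
  refine Submodule.map_le_iff_le_comap.mpr (strandWith_le fun σ hσ hcard hsup => ?_)
  rw [Submodule.mem_comap, taylorDiffWith_single, one_smul, taylorDWith]
  refine Submodule.sum_mem _ fun G hG => ?_
  rw [taylorDTerm]
  split_ifs with hG'
  · refine Submodule.smul_mem _ _ (single_mem_strandWith ((Finset.erase_subset _ _).trans hσ) ?_
      (hG'.trans hsup))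
    rw [Finset.card_erase_of_mem hG, hcard, Nat.add_sub_cancel]
  · exact Submodule.zero_mem _

end TaylorDiff

section Deletion

/-- For generators with `s y ≤ s x`, the symbol `±(τ ∪ {y})` has the same support as `τ ∋ x`, and
`id - d h - h d` retracts the Taylor complex onto the symbols avoiding `x`. -/
noncomputable def deletionHomotopy (x y : Finset V) :
    (Finset (Finset V) →₀ k) →ₗ[k] (Finset (Finset V) →₀ k) :=
  Finsupp.lsum k fun τ => LinearMap.toSpanSingleton k _
    (if x ∈ τ ∧ y ∉ τ then taylorSign k (insert y τ) y • Finsupp.single (insert y τ) (1 : k)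
    else 0)

variable {k} {s : Finset V → Finset V} {x y : Finset V}

theorem deletionHomotopy_single (τ : Finset (Finset V)) (c : k) :
    deletionHomotopy k x y (Finsupp.single τ c) = c •
      if x ∈ τ ∧ y ∉ τ then taylorSign k (insert y τ) y • Finsupp.single (insert y τ) (1 : k)
      else 0 := by
  simp [deletionHomotopy, LinearMap.toSpanSingleton_apply]

theorem supported_le_ker_deletionHomotopy :
    Finsupp.supported k k {τ | x ∉ τ} ≤ LinearMap.ker (deletionHomotopy k x y) := by
  rw [Finsupp.supported_eq_span_single, Submodule.span_le]
  rintro _ ⟨τ, hτ, rfl⟩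
  rw [SetLike.mem_coe, LinearMap.mem_ker, deletionHomotopy_single,
    if_neg fun h => hτ h.1, smul_zero]

theorem taylorDiffWith_single_mem_supported {τ : Finset (Finset V)} (hτ : x ∉ τ) :
    taylorDiffWith k s (Finsupp.single τ 1) ∈ Finsupp.supported k k {τ | x ∉ τ} :=
  map_taylorDiffWith_supported_le (P := {τ | x ∉ τ})
    (fun _ hσ _ h => hσ (Finset.mem_of_mem_erase h))
    (Submodule.mem_map_of_mem (Finsupp.single_mem_supported k _ hτ))

theorem deletionHomotopy_taylorDWith_of_mem_of_mem (hs : s y ≤ s x) (hyx : y ≠ x)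
    {τ : Finset (Finset V)} (hx : x ∈ τ) (hy : y ∈ τ) :
    deletionHomotopy k x y (taylorDWith k s τ) = Finsupp.single τ 1 := by
  have hxy : x ∈ τ.erase y := Finset.mem_erase.mpr ⟨hyx.symm, hx⟩
  have hsup : (τ.erase y).sup s = τ.sup s := by
    rw [← Finset.insert_erase hy, Finset.erase_insert (Finset.notMem_erase y τ), Finset.sup_insert,
      sup_eq_right.mpr (hs.trans (Finset.le_sup hxy))]
  rw [taylorDWith, map_sum, Finset.sum_eq_single_of_mem y hy fun G _ hGy => ?_]
  · rw [taylorDTerm, if_pos hsup, map_smul, deletionHomotopy_single,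
      if_pos ⟨hxy, Finset.notMem_erase y τ⟩, Finset.insert_erase hy, one_smul, smul_smul,
      taylorSign_mul_self, one_smul]
  · rw [taylorDTerm]
    split_ifs
    · rw [map_smul, deletionHomotopy_single,
        if_neg fun h => h.2 (Finset.mem_erase.mpr ⟨hGy.symm, hy⟩), smul_zero, smul_zero]
    · exact map_zero _

theorem smul_taylorDTerm_insert_add_deletionHomotopy_eq_zero (hs : s y ≤ s x)
    {τ : Finset (Finset V)} (hx : x ∈ τ) (hy : y ∉ τ) {G : Finset V} (hG : G ∈ τ) (hGx : G ≠ x) :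
    taylorSign k (insert y τ) y • taylorDTerm k s (insert y τ) G +
      deletionHomotopy k x y (taylorDTerm k s τ G) = 0 := by
  have hxG : x ∈ τ.erase G := Finset.mem_erase.mpr ⟨hGx.symm, hx⟩
  have hyG : y ≠ G := fun h => hy (h ▸ hG)
  have herase : (insert y τ).erase G = insert y (τ.erase G) := Finset.erase_insert_of_ne hyG
  have hcond : ((insert y τ).erase G).sup s = (insert y τ).sup s ↔
      (τ.erase G).sup s = τ.sup s := by
    rw [herase, Finset.sup_insert, Finset.sup_insert,
      sup_eq_right.mpr (hs.trans (Finset.le_sup hxG)),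
      sup_eq_right.mpr (hs.trans (Finset.le_sup hx))]
  rw [taylorDTerm, taylorDTerm]
  by_cases hc : (τ.erase G).sup s = τ.sup s
  · rw [if_pos (hcond.mpr hc), if_pos hc, map_smul, deletionHomotopy_single,
      if_pos ⟨hxG, fun h => hy (Finset.mem_of_mem_erase h)⟩, one_smul, herase, smul_smul,
      smul_smul, ← add_smul]
    have e1 := taylorSign_erase (k := k) (Finset.mem_insert_self y τ) G
    have e2 := taylorSign_erase (k := k) (τ := insert y τ) (Finset.mem_insert_of_mem hG) y
    rw [Finset.erase_insert hy] at e1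
    rw [herase] at e2
    have hcoef : taylorSign k (insert y τ) y * taylorSign k (insert y τ) G +
        taylorSign k τ G * taylorSign k (insert y (τ.erase G)) y = 0 := by
      rw [e1, e2]
      linear_combination (taylorSign k (insert y τ) G * taylorSign k (insert y τ) y) *
        ite_toColex_lt_mul_ite_toColex_lt (k := k) hyG
    rw [hcoef, zero_smul]
  · rw [if_neg (mt hcond.mp hc), if_neg hc, smul_zero, map_zero, add_zero]

variable {S : Finset (Finset V)}

theorem sub_taylorDiffWith_deletionHomotopy_mem_of_not_mem (hyS : y ∈ S) (hs : s y ≤ s x)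
    {τ : Finset (Finset V)} (hτ : τ ⊆ S) (hx : x ∈ τ) (hy : y ∉ τ) :
    Finsupp.single τ 1 - taylorDiffWith k s (deletionHomotopy k x y (Finsupp.single τ 1)) -
      deletionHomotopy k x y (taylorDiffWith k s (Finsupp.single τ 1)) ∈
        strandWith k s (S.erase x) τ.card (τ.sup s) := by
  -- the `y`-face of `d (h τ)` is `τ` itself, its `G`-faces for `G ≠ x` cancel against
  -- `h (d τ)`, and its `x`-face avoids `x`
  have hsup : (insert y τ).sup s = τ.sup s := by
    rw [Finset.sup_insert, sup_eq_right.mpr (hs.trans (Finset.le_sup hx))]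
  have hdh : taylorDiffWith k s (deletionHomotopy k x y (Finsupp.single τ 1)) =
      Finsupp.single τ 1 +
        ∑ G ∈ τ, taylorSign k (insert y τ) y • taylorDTerm k s (insert y τ) G := by
    rw [deletionHomotopy_single, if_pos ⟨hx, hy⟩, one_smul, map_smul, taylorDiffWith_single,
      one_smul, taylorDWith, Finset.sum_insert hy, smul_add, Finset.smul_sum, taylorDTerm,
      Finset.erase_insert hy, if_pos hsup.symm, smul_smul, taylorSign_mul_self, one_smul]
  have hhd : deletionHomotopy k x y (taylorDiffWith k s (Finsupp.single τ 1)) =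
      ∑ G ∈ τ, deletionHomotopy k x y (taylorDTerm k s τ G) := by
    rw [taylorDiffWith_single, one_smul, taylorDWith, map_sum]
  rw [hdh, hhd, sub_add_eq_sub_sub, sub_self, zero_sub, ← neg_add',
    ← Finset.sum_add_distrib]
  refine Submodule.neg_mem _ (Submodule.sum_mem _ fun G hG => ?_)
  obtain rfl | hxG := eq_or_ne x G
  · have hterm : taylorDTerm k s τ x ∈ Finsupp.supported k k {τ | x ∉ τ} := by
      rw [taylorDTerm]
      split_ifs
      · exact Submodule.smul_mem _ _ (Finsupp.single_mem_supported k _ (Finset.notMem_erase _ _))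
      · exact Submodule.zero_mem _
    rw [LinearMap.mem_ker.mp (supported_le_ker_deletionHomotopy hterm), add_zero, taylorDTerm]
    split_ifs with hc
    · refine Submodule.smul_mem _ _ (Submodule.smul_mem _ _
        (single_mem_strandWith ?_ ?_ (hc.trans hsup)))
      · exact Finset.erase_subset_erase _ (Finset.insert_subset hyS hτ)
      · rw [Finset.card_erase_of_mem (Finset.mem_insert_of_mem hx), Finset.card_insert_of_notMem hy,
          Nat.add_sub_cancel]
    · rw [smul_zero]
      exact Submodule.zero_mem _
  · rw [smul_taylorDTerm_insert_add_deletionHomotopy_eq_zero hs hx hy hG hxG.symm]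
    exact Submodule.zero_mem _

theorem sub_taylorDiffWith_deletionHomotopy_mem (hyS : y ∈ S) (hyx : y ≠ x) (hs : s y ≤ s x)
    {τ : Finset (Finset V)} (hτ : τ ⊆ S) :
    Finsupp.single τ 1 - taylorDiffWith k s (deletionHomotopy k x y (Finsupp.single τ 1)) -
      deletionHomotopy k x y (taylorDiffWith k s (Finsupp.single τ 1)) ∈
        strandWith k s (S.erase x) τ.card (τ.sup s) := by
  by_cases hx : x ∈ τ
  · by_cases hy : y ∈ τ
    · rw [deletionHomotopy_single, if_neg fun h => h.2 hy, smul_zero, map_zero, sub_zero,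
        taylorDiffWith_single, one_smul, deletionHomotopy_taylorDWith_of_mem_of_mem hs hyx hx hy,
        sub_self]
      exact Submodule.zero_mem _
    · exact sub_taylorDiffWith_deletionHomotopy_mem_of_not_mem hyS hs hτ hx hy
  · rw [deletionHomotopy_single, if_neg fun h => hx h.1, smul_zero, map_zero, sub_zero,
      LinearMap.mem_ker.mp (supported_le_ker_deletionHomotopy (y := y)
        (taylorDiffWith_single_mem_supported hx)), sub_zero]
    exact single_mem_strandWith (Finset.subset_erase.mpr ⟨hτ, hx⟩) rfl rfl

theorem multigradedBettiWith_erase (hyS : y ∈ S) (hyx : y ≠ x) (hs : s y ≤ s x) (i : ℕ)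
    (u : Finset V) : multigradedBettiWith k s S i u = multigradedBettiWith k s (S.erase x) i u := by
  have hretract : ∀ m, ∀ v ∈ strandWith k s S m u,
      v - taylorDiffWith k s (deletionHomotopy k x y v) -
        deletionHomotopy k x y (taylorDiffWith k s v) ∈ strandWith k s (S.erase x) m u :=
    fun m => strandWith_le (p := (strandWith k s (S.erase x) m u).comap
      (LinearMap.id - taylorDiffWith k s ∘ₗ deletionHomotopy k x y -
        deletionHomotopy k x y ∘ₗ taylorDiffWith k s))
      fun τ hτ hcard hsup => hcard ▸ hsup ▸ sub_taylorDiffWith_deletionHomotopy_mem hyS hyx hs hτ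
  have hker : strandWith k s (S.erase x) i u ≤ LinearMap.ker (deletionHomotopy k x y) :=
    (strandWith_le fun _ hτ _ _ => Finsupp.single_mem_supported k _
      fun h => Finset.notMem_erase x S (hτ h)).trans supported_le_ker_deletionHomotopy
  have hup : strandWith k s S i u ≤ (strandWith k s S (i + 1) u).comap (deletionHomotopy k x y) :=
    strandWith_le fun τ hτ hcard hsup => by
      rw [Submodule.mem_comap, deletionHomotopy_single, one_smul]
      split_ifs with h
      · refine Submodule.smul_mem _ _ (single_mem_strandWith (Finset.insert_subset hyS hτ) ?_ ?_)
        · rw [Finset.card_insert_of_notMem h.2, hcard]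
        · rw [Finset.sup_insert, sup_eq_right.mpr (hs.trans (Finset.le_sup h.1)), hsup]
      · exact Submodule.zero_mem _
  exact homologyFinrank_eq_of_homotopy taylorDiffWith_taylorDiffWith
    (strandWith_mono (Finset.erase_subset _ _)) (strandWith_mono (Finset.erase_subset _ _))
    (hretract i) (hretract (i + 1)) (fun v hv => hker hv) (fun v hv => hup hv)

end Deletion

section Domination

variable {k} {s : Finset V → Finset V}

theorem multigradedBettiWith_eq_of_subset {S' S : Finset (Finset V)} (hS : S' ⊆ S)
    (hdom : ∀ x ∈ S, ∃ y ∈ S', s y ≤ s x) (i : ℕ) (u : Finset V) :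
    multigradedBettiWith k s S i u = multigradedBettiWith k s S' i u := by
  induction S using Finset.strongInduction with
  | H S ih =>
    by_cases hSS : S ⊆ S'
    · rw [Finset.Subset.antisymm hSS hS]
    obtain ⟨x, hxS, hxS'⟩ := Finset.not_subset.mp hSS
    obtain ⟨y, hyS', hyx⟩ := hdom x hxS
    rw [multigradedBettiWith_erase (hS hyS') (ne_of_mem_of_not_mem hyS' hxS') hyx,
      ih _ (Finset.erase_ssubset hxS) (Finset.subset_erase.mpr ⟨hS, hxS'⟩)
        fun z hz => hdom z (Finset.mem_of_mem_erase hz)]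

theorem multigradedBettiWith_congr {s' : Finset V → Finset V} {S : Finset (Finset V)}
    (h : ∀ G ∈ S, s G = s' G) (i : ℕ) (u : Finset V) :
    multigradedBettiWith k s S i u = multigradedBettiWith k s' S i u := by
  have hsup : ∀ σ ⊆ S, σ.sup s = σ.sup s' := fun σ hσ =>
    Finset.sup_congr rfl fun G hG => h G (hσ hG)
  have hstrand : ∀ m, strandWith k s S m u = strandWith k s' S m u := fun m => le_antisymm
    (strandWith_le fun σ hσ hcard hu => single_mem_strandWith hσ hcard ((hsup σ hσ).symm.trans hu))
    (strandWith_le fun σ hσ hcard hu => single_mem_strandWith hσ hcard ((hsup σ hσ).trans hu))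
  have hd : Set.EqOn (taylorDiffWith k s) (taylorDiffWith k s')
      (Finsupp.supported k k {σ | σ ⊆ S}) := by
    rw [Finsupp.supported_eq_span_single]
    refine LinearMap.eqOn_span' ?_
    rintro _ ⟨σ, hσ, rfl⟩
    simp only [taylorDiffWith_single, taylorDWith, taylorDTerm, one_smul,
      hsup σ hσ, hsup _ ((Finset.erase_subset _ _).trans hσ)]
  rw [multigradedBettiWith, multigradedBettiWith, ← hstrand, ← hstrand]
  exact homologyFinrank_congr (fun v hv => hd (strandWith_le_supported hv))
    (fun v hv => hd (strandWith_le_supported hv))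

end Domination

section Gamma

variable {α : Type*} [DecidableEq α] {Δ : Finset (Finset α)} {F : Finset α}

theorem exists_mem_erase_sdiff_eq_of_mem_gammaOf {A : Finset α} (hA : A ∈ gammaOf Δ F) :
    ∃ G ∈ Δ.erase F, G \ F = A :=
  Finset.mem_image.mp (Finset.mem_filter.mp hA).1

theorem sdiff_eq_self_of_mem_gammaOf {A : Finset α} (hA : A ∈ gammaOf Δ F) : A \ F = A := by
  obtain ⟨G, -, rfl⟩ := exists_mem_erase_sdiff_eq_of_mem_gammaOf hA
  exact sdiff_idem

theorem exists_mem_gammaOf_subset {G : Finset α} (hG : G ∈ Δ.erase F) :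
    ∃ A ∈ gammaOf Δ F, A ⊆ G \ F := by
  obtain ⟨A, hAG, hmin⟩ := Finset.exists_le_minimal _ (Finset.mem_image_of_mem (· \ F) hG)
  exact ⟨A, Finset.mem_filter.mpr ⟨hmin.1, fun B hB hBA => le_antisymm hBA (hmin.2 hB hBA)⟩, hAG⟩

theorem vertexSet_gammaOf_subset : vertexSet (gammaOf Δ F) ⊆ vertexSet Δ \ F := by
  refine Finset.sup_le fun A hA => ?_
  obtain ⟨G, hG, rfl⟩ := exists_mem_erase_sdiff_eq_of_mem_gammaOf hA
  exact Finset.sdiff_subset_sdiff (Finset.le_sup (f := id) (Finset.mem_of_mem_erase hG)) le_rfl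

end Gamma

theorem multigradedBettiWith_sdiff_erase_eq_gammaOf (Δ : Finset (Finset V)) (F : Finset V) (i : ℕ)
    (u : Finset V) :
    multigradedBettiWith k (· \ F) (Δ.erase F) i u = multigradedBetti k (gammaOf Δ F) i u := by
  rw [multigradedBetti_eq_multigradedBettiWith,
    ← multigradedBettiWith_eq_of_subset (S := Δ.erase F ∪ gammaOf Δ F) Finset.subset_union_left,
    multigradedBettiWith_eq_of_subset Finset.subset_union_right]
  · exact multigradedBettiWith_congr (fun A hA => sdiff_eq_self_of_mem_gammaOf hA) i u
  · intro G hG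
    rcases Finset.mem_union.mp hG with hG | hG
    · obtain ⟨A, hA, hAG⟩ := exists_mem_gammaOf_subset hG
      exact ⟨A, hA, by rwa [sdiff_eq_self_of_mem_gammaOf hA]⟩
    · exact ⟨G, hG, le_rfl⟩
  · intro A hA
    rcases Finset.mem_union.mp hA with hA | hA
    · exact ⟨A, hA, le_rfl⟩
    · obtain ⟨G, hG, hGA⟩ := exists_mem_erase_sdiff_eq_of_mem_gammaOf hA
      exact ⟨G, hG, by rw [hGA, sdiff_eq_self_of_mem_gammaOf hA]⟩

section Cone

/-- Counts the generators of `τ` above `F` (`taylorSign` counts those below): this is the sign that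
makes `coneMap` a chain map. -/
noncomputable def coneSign (F : Finset V) (τ : Finset (Finset V)) : k :=
  (-1 : k) ^ (τ.filter fun H => toColex F < toColex H).card

noncomputable def coneMap (F : Finset V) :
    (Finset (Finset V) →₀ k) →ₗ[k] (Finset (Finset V) →₀ k) :=
  Finsupp.lsum k fun τ => LinearMap.toSpanSingleton k _
    (coneSign k F τ • Finsupp.single (insert F τ) (1 : k))

noncomputable def coneMapLeftInv (F : Finset V) :
    (Finset (Finset V) →₀ k) →ₗ[k] (Finset (Finset V) →₀ k) :=
  Finsupp.lsum k fun σ => LinearMap.toSpanSingleton k _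
    (if F ∈ σ then coneSign k F (σ.erase F) • Finsupp.single (σ.erase F) (1 : k) else 0)

variable {k} {F : Finset V}

theorem coneSign_mul_self (τ : Finset (Finset V)) : coneSign k F τ * coneSign k F τ = 1 := by
  rw [coneSign, ← mul_pow]
  norm_num

theorem coneSign_erase {τ : Finset (Finset V)} {G : Finset V} (hG : G ∈ τ) :
    coneSign k F (τ.erase G) = (if toColex F < toColex G then -1 else 1) * coneSign k F τ :=
  neg_one_pow_card_filter_erase _ hG

theorem coneMap_single (τ : Finset (Finset V)) (c : k) :
    coneMap k F (Finsupp.single τ c) = c • coneSign k F τ • Finsupp.single (insert F τ) 1 := by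
  simp [coneMap, LinearMap.toSpanSingleton_apply]

theorem coneMapLeftInv_leftInvOn :
    Set.LeftInvOn (coneMapLeftInv k F) (coneMap k F)
      (Finsupp.supported k k {τ : Finset (Finset V) | F ∉ τ} : Set (Finset (Finset V) →₀ k)) := by
  rw [Finsupp.supported_eq_span_single]
  refine LinearMap.eqOn_span' (f := coneMapLeftInv k F ∘ₗ coneMap k F) (g := LinearMap.id) ?_
  rintro _ ⟨τ, hτ, rfl⟩
  simp [coneMapLeftInv, coneMap_single, LinearMap.toSpanSingleton_apply, Finset.erase_insert hτ,
    coneSign_mul_self]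

theorem union_eq_union_iff_sdiff_eq {α : Type*} [DecidableEq α] {F A B : Finset α} :
    F ∪ A = F ∪ B ↔ A \ F = B \ F :=
  ⟨fun h => by rw [← Finset.union_sdiff_left, h, Finset.union_sdiff_left],
    fun h => by rw [← Finset.union_sdiff_self_eq_union, h, Finset.union_sdiff_self_eq_union]⟩

/-- Removing the cone point `F` of `insert F τ` never preserves the support, since `F` alone
covers `a`; the other faces match those of `τ` with supports taken modulo `F`. -/
theorem taylorDiffWith_coneMap_single {a : V} (haF : a ∈ F) {τ : Finset (Finset V)}
    (hτ : ∀ G ∈ τ, a ∉ G) :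
    taylorDiffWith k id (coneMap k F (Finsupp.single τ 1)) =
      coneMap k F (taylorDiffWith k (· \ F) (Finsupp.single τ 1)) := by
  have hFτ : F ∉ τ := fun h => hτ F h haF
  have hF : taylorDTerm k id (insert F τ) F = 0 := by
    refine if_neg fun h => ?_
    rw [Finset.erase_insert hFτ, Finset.sup_insert] at h
    obtain ⟨G, hG, haG⟩ := Finset.mem_sup.mp (h ▸ Finset.mem_union_left _ haF : a ∈ τ.sup id)
    exact hτ G hG haG
  rw [coneMap_single, one_smul, map_smul, taylorDiffWith_single, one_smul, taylorDWith,
    Finset.sum_insert hFτ, hF, zero_add, Finset.smul_sum, taylorDiffWith_single, one_smul,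
    taylorDWith, map_sum]
  refine Finset.sum_congr rfl fun G hG => ?_
  have hFG : F ≠ G := fun h => hFτ (h ▸ hG)
  have herase : (insert F τ).erase G = insert F (τ.erase G) := Finset.erase_insert_of_ne hFG
  have hcond : (insert F (τ.erase G)).sup id = (insert F τ).sup id ↔
      (τ.erase G).sup (· \ F) = τ.sup (· \ F) := by
    rw [Finset.sup_insert, Finset.sup_insert, Finset.sup_sdiff_right, Finset.sup_sdiff_right]
    exact union_eq_union_iff_sdiff_eq
  rw [taylorDTerm, taylorDTerm, herase]
  by_cases hc : (τ.erase G).sup (· \ F) = τ.sup (· \ F)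
  · have hsign := taylorSign_erase (k := k) (Finset.mem_insert_self F τ) G
    rw [Finset.erase_insert hFτ] at hsign
    rw [if_pos (hcond.mpr hc), if_pos hc, map_smul, coneMap_single, one_smul, smul_smul, smul_smul,
      hsign, coneSign_erase hG]
    congr 1
    split_ifs <;> ring
  · rw [if_neg (mt hcond.mp hc), if_neg hc, smul_zero, map_zero]

theorem map_coneMap_strandWith {Δ : Finset (Finset V)} (hF : F ∈ Δ) {a : V} (haF : a ∈ F)
    (hfree : ∀ G ∈ Δ, a ∈ G → G = F) (i : ℕ) :
    (strandWith k (· \ F) (Δ.erase F) i (vertexSet Δ \ F)).map (coneMap k F) =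
      strandWith k id Δ (i + 1) (vertexSet Δ) := by
  have hFV : F ⊆ vertexSet Δ := Finset.le_sup (f := id) hF
  refine le_antisymm (Submodule.map_le_iff_le_comap.mpr (strandWith_le fun τ hτ hcard hsup => ?_))
    (strandWith_le fun σ hσ hcard hsup => ?_)
  · have hFτ : F ∉ τ := fun h => Finset.notMem_erase F Δ (hτ h)
    rw [Submodule.mem_comap, coneMap_single, one_smul]
    refine Submodule.smul_mem _ _ (single_mem_strandWith
      (Finset.insert_subset hF (hτ.trans (Finset.erase_subset _ _)))
      (by rw [Finset.card_insert_of_notMem hFτ, hcard]) ?_)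
    rw [Finset.sup_insert]
    exact (union_eq_union_iff_sdiff_eq.mpr ((Finset.sup_sdiff_right τ id F).symm.trans hsup)).trans
      (Finset.union_eq_right.mpr hFV)
  · have hFσ : F ∈ σ := by
      have haσ : a ∈ σ.sup id := by
        rw [hsup]
        exact hFV haF
      obtain ⟨G, hG, haG⟩ := Finset.mem_sup.mp haσ
      exact hfree G (hσ hG) haG ▸ hG
    have hcone : Finsupp.single σ (1 : k) =
        coneMap k F (coneSign k F (σ.erase F) • Finsupp.single (σ.erase F) 1) := by
      rw [map_smul, coneMap_single, one_smul, smul_smul, coneSign_mul_self, one_smul,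
        Finset.insert_erase hFσ]
    rw [hcone]
    refine Submodule.mem_map_of_mem (Submodule.smul_mem _ _ (single_mem_strandWith
      (Finset.erase_subset_erase _ hσ) (by rw [Finset.card_erase_of_mem hFσ, hcard]; rfl) ?_))
    rw [Finset.sup_sdiff_right, ← hsup, ← Finset.insert_erase hFσ, Finset.sup_insert,
      Finset.erase_insert (Finset.notMem_erase F σ)]
    exact (Finset.union_sdiff_left _ _).symm

theorem taylorDiffWith_coneMap_eqOn {a : V} (haF : a ∈ F) :
    Set.EqOn (taylorDiffWith k id ∘ₗ coneMap k F) (coneMap k F ∘ₗ taylorDiffWith k (· \ F))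
      (Finsupp.supported k k {τ : Finset (Finset V) | ∀ G ∈ τ, a ∉ G}) := by
  rw [Finsupp.supported_eq_span_single]
  refine LinearMap.eqOn_span' ?_
  rintro _ ⟨τ, hτ, rfl⟩
  exact taylorDiffWith_coneMap_single haF hτ

theorem multigradedBetti_succ_vertexSet {Δ : Finset (Finset V)} (hF : F ∈ Δ)
    (hfree : HasFreeVertex Δ F) (i : ℕ) :
    multigradedBetti k Δ (i + 1) (vertexSet Δ) =
      multigradedBettiWith k (· \ F) (Δ.erase F) i (vertexSet Δ \ F) := by
  obtain ⟨a, haF, hfree⟩ := hfree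
  have hstrand : ∀ m, strandWith k (· \ F) (Δ.erase F) m (vertexSet Δ \ F) ≤
      Finsupp.supported k k {τ | ∀ G ∈ τ, a ∉ G} := fun m =>
    strandWith_le fun τ hτ _ _ => Finsupp.single_mem_supported k _ fun G hG haG =>
      Finset.ne_of_mem_erase (hτ hG) (hfree G (Finset.mem_of_mem_erase (hτ hG)) haG)
  exact homologyFinrank_eq_of_injOn taylorDiffWith_taylorDiffWith
    (map_taylorDiffWith_supported_le (P := {τ | ∀ G ∈ τ, a ∉ G})
      fun _ hτ _ H hH => hτ H (Finset.mem_of_mem_erase hH))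
    (coneMapLeftInv_leftInvOn.injOn.mono (Finsupp.supported_mono
      fun τ (hτ : ∀ G ∈ τ, a ∉ G) (hFτ : F ∈ τ) => hτ F hFτ haF))
    (fun v hv => taylorDiffWith_coneMap_eqOn haF hv) (hstrand i) (hstrand (i + 1))
    map_taylorDiffWith_strandWith_le (map_coneMap_strandWith hF haF hfree i)
    (map_coneMap_strandWith hF haF hfree (i + 1))

end Cone

section TopDegree

variable {k} {Δ : Finset (Finset V)} {u : Finset V}

theorem multigradedBetti_eq_zero_of_not_subset (h : ¬u ⊆ vertexSet Δ) (i : ℕ) :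
    multigradedBetti k Δ i u = 0 := by
  have hbot : strandWith k id Δ i u = ⊥ := eq_bot_iff.mpr <| strandWith_le fun σ hσ _ hsup =>
    absurd (hsup ▸ Finset.sup_mono hσ) h
  rw [multigradedBetti_eq_multigradedBettiWith, multigradedBettiWith, hbot, homologyFinrank,
    inf_bot_eq, inf_bot_eq, finrank_bot, Nat.zero_sub]

theorem gradedBetti_card_eq_multigradedBetti (h : vertexSet Δ ⊆ u) (i : ℕ) :
    gradedBetti k Δ i u.card = multigradedBetti k Δ i u := by
  obtain rfl | hlt := h.eq_or_ssubset
  · rw [gradedBetti, Finset.powersetCard_self, Finset.sum_singleton]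
  · rw [gradedBetti, Finset.powersetCard_eq_empty.mpr (Finset.card_lt_card hlt), Finset.sum_empty,
      multigradedBetti_eq_zero_of_not_subset hlt.not_subset]

end TopDegree

theorem gradedBetti_top_eq_gammaOf
    (Δ : Finset (Finset V))
    (n : ℕ) (hn : (vertexSet Δ).card = n)
    (F : Finset V) (hF : F ∈ Δ) (hfree : HasFreeVertex Δ F)
    (i : ℕ) (hi : 1 ≤ i) :
    gradedBetti k Δ i n = gradedBetti k (gammaOf Δ F) (i - 1) (n - F.card) := by
  obtain ⟨j, rfl⟩ := Nat.exists_eq_add_of_le' hi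
  have hFV : F ⊆ vertexSet Δ := Finset.le_sup (f := id) hF
  rw [← hn, ← Finset.card_sdiff_of_subset hFV, Nat.add_sub_cancel,
    gradedBetti_card_eq_multigradedBetti le_rfl,
    gradedBetti_card_eq_multigradedBetti vertexSet_gammaOf_subset,
    multigradedBetti_succ_vertexSet hF hfree, multigradedBettiWith_sdiff_erase_eq_gammaOf]

end FacetPaper
end

section
/- Let Δ be a simplicial complex, F a facet of Δ with a free vertex, let Γ = (Δ∖⟨F⟩)_{F̄} be the simplicial complex whose facets are the minimal elements under inclusion of {G∖F : G a facet of Δ, G ≠ F}, and let u ⊆ F̄ = V(Δ)∖F. Then the induced subcollection Γ_[u] equals (Δ_[F∪u]∖⟨F⟩)_{F̄}, i.e., Γ_[u] is the simplicial complex whose facets are the minimal elements under inclusion of {G∖F : G a facet of Δ_[F∪u], G ≠ F}. -/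
/-!
Deleting `F` turns "`G ∖ F ⊆ u`" into "`G ⊆ F ∪ u`", so the family
`{G ∖ F : G ∈ Δ_[F ∪ u], G ≠ F}` is exactly the part of `{G ∖ F : G ∈ Δ, G ≠ F}` lying
inside `u`. Taking minimal elements commutes with restricting to such a downward-closed
part, since anything below a member of it also lies in it.
-/

namespace FacetPaper

variable (k : Type*) [Field k]
variable {V : Type*} [DecidableEq V] [LinearOrder V]

theorem filter_minimals {α : Type*} [DecidableEq α] {p : Finset α → Prop} [DecidablePred p]
    (hp : ∀ A B, B ⊆ A → p A → p B) (S : Finset (Finset α)) :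
    (minimals S).filter p = minimals (S.filter p) := by
  ext A
  simp only [minimals, Finset.mem_filter]
  constructor
  · rintro ⟨⟨hA, hmin⟩, hpA⟩
    exact ⟨⟨hA, hpA⟩, fun B hB hBA => hmin B hB.1 hBA⟩
  · rintro ⟨⟨hA, hpA⟩, hmin⟩
    exact ⟨⟨hA, fun B hB hBA => hmin B ⟨hB, hp A B hBA hpA⟩ hBA⟩, hpA⟩

theorem image_sdiff_induced_union {α : Type*} [DecidableEq α]
    (Δ : Finset (Finset α)) (F u : Finset α) :
    (induced Δ (F ∪ u)).image (· \ F) = (Δ.image (· \ F)).filter (· ⊆ u) := by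
  simp only [induced, Finset.filter_image, sdiff_le_iff]
  rfl

theorem induced_gammaOf_general
    (Δ : Finset (Finset V))
    (F : Finset V)
    (u : Finset V) :
    induced (gammaOf Δ F) u = gammaOf (induced Δ (F ∪ u)) F := by
  rw [gammaOf, gammaOf, induced, filter_minimals (fun _ _ hBA hA => hBA.trans hA),
    ← image_sdiff_induced_union, induced, induced, Finset.filter_erase]

/-- If `F` is a facet of `Δ` with a free vertex,
`Γ = (Δ ∖ ⟨F⟩)_{F̄}` and `u ⊆ F̄ = V(Δ) ∖ F`, then
`Γ_[u] = (Δ_[F ∪ u] ∖ ⟨F⟩)_{F̄}`. -/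
theorem induced_gammaOf
    (Δ : Finset (Finset V)) (hfacet : IsAntichain (· ⊆ ·) (Δ : Set (Finset V)))
    (F : Finset V) (hF : F ∈ Δ) (hfree : HasFreeVertex Δ F)
    (u : Finset V) (hu : u ⊆ vertexSet Δ \ F) :
    induced (gammaOf Δ F) u = gammaOf (induced Δ (F ∪ u)) F :=
  induced_gammaOf_general Δ F u

end FacetPaper
end

section
/- Let Δ be a simplicial complex, F a facet of Δ with a free vertex, let Γ = (Δ∖⟨F⟩)_{F̄} be the simplicial complex whose facets are the minimal elements under inclusion of {G∖F : G a facet of Δ, G ≠ F}, and let u ⊆ F̄ = V(Δ)∖F. If the induced subcollection Γ_[u] has exactly |u| vertices, then the induced subcollection Δ_[F∪u] has exactly |u| + |F| vertices. -/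
namespace FacetPaper

variable (k : Type*) [Field k]
variable {V : Type*} [DecidableEq V] [LinearOrder V]

/-!
Always `V(Γ_[u]) ⊆ u`, so the cardinality hypothesis says that every vertex of `u` lies in
a facet `G ∖ F ⊆ u` of `Γ`; then `G ⊆ F ∪ u` is a facet of `Δ_[F ∪ u]`. These facets together
with `F` cover `F ∪ u`, a disjoint union since `u ⊆ F̄`.
-/

section

omit [LinearOrder V]

theorem mem_vertexSet {Δ : Finset (Finset V)} {x : V} :
    x ∈ vertexSet Δ ↔ ∃ G ∈ Δ, x ∈ G :=
  Finset.mem_sup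

theorem mem_induced {Δ : Finset (Finset V)} {u G : Finset V} :
    G ∈ induced Δ u ↔ G ∈ Δ ∧ G ⊆ u :=
  Finset.mem_filter

theorem vertexSet_induced_subset (Δ : Finset (Finset V)) (u : Finset V) :
    vertexSet (induced Δ u) ⊆ u :=
  Finset.sup_le fun _ hG => (mem_induced.1 hG).2

theorem subset_vertexSet_induced {Δ : Finset (Finset V)} {u G : Finset V}
    (hG : G ∈ Δ) (hGu : G ⊆ u) : G ⊆ vertexSet (induced Δ u) :=
  Finset.le_sup (f := id) (mem_induced.2 ⟨hG, hGu⟩)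

theorem vertexSet_induced_eq_of_card_eq {Δ : Finset (Finset V)} {u : Finset V}
    (h : (vertexSet (induced Δ u)).card = u.card) : vertexSet (induced Δ u) = u :=
  Finset.eq_of_subset_of_card_le (vertexSet_induced_subset Δ u) h.ge

theorem exists_sdiff_eq_of_mem_gammaOf {Δ : Finset (Finset V)} {F A : Finset V}
    (hA : A ∈ gammaOf Δ F) : ∃ G ∈ Δ, G \ F = A := by
  obtain ⟨G, hG, rfl⟩ := Finset.mem_image.1 (Finset.mem_filter.1 hA).1
  exact ⟨G, Finset.mem_of_mem_erase hG, rfl⟩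

theorem vertexSet_induced_gammaOf_subset (Δ : Finset (Finset V)) (F u : Finset V) :
    vertexSet (induced (gammaOf Δ F) u) ⊆ vertexSet (induced Δ (F ∪ u)) := by
  intro x hx
  obtain ⟨A, hA, hxA⟩ := mem_vertexSet.1 hx
  obtain ⟨hAΓ, hAu⟩ := mem_induced.1 hA
  obtain ⟨G, hG, rfl⟩ := exists_sdiff_eq_of_mem_gammaOf hAΓ
  exact subset_vertexSet_induced hG (sdiff_le_iff.1 hAu) (Finset.sdiff_subset hxA)

end

theorem card_vertexSet_induced_union_general
    (Δ : Finset (Finset V))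
    (F : Finset V) (hF : F ∈ Δ)
    (u : Finset V) (hu : u ⊆ vertexSet Δ \ F)
    (hcard : (vertexSet (induced (gammaOf Δ F) u)).card = u.card) :
    (vertexSet (induced Δ (F ∪ u))).card = u.card + F.card := by
  have hΓu : vertexSet (induced (gammaOf Δ F) u) = u :=
    vertexSet_induced_eq_of_card_eq hcard
  have hΔFu : vertexSet (induced Δ (F ∪ u)) = F ∪ u := by
    refine (vertexSet_induced_subset Δ (F ∪ u)).antisymm (Finset.union_subset ?_ ?_)
    · exact subset_vertexSet_induced hF Finset.subset_union_left
    · exact hΓu.ge.trans (vertexSet_induced_gammaOf_subset Δ F u)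
  have hdisj : Disjoint F u := (Finset.disjoint_of_subset_left hu Finset.sdiff_disjoint).symm
  rw [hΔFu, Finset.card_union_of_disjoint hdisj, add_comm]

/-- If `F` is a facet of `Δ` with a free vertex,
`Γ = (Δ ∖ ⟨F⟩)_{F̄}` and `u ⊆ F̄ = V(Δ) ∖ F`, and the induced subcollection
`Γ_[u]` has exactly `|u|` vertices, then `Δ_[F ∪ u]` has exactly `|u| + |F|`
vertices. -/
theorem card_vertexSet_induced_union
    (Δ : Finset (Finset V)) (hfacet : IsAntichain (· ⊆ ·) (Δ : Set (Finset V)))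
    (F : Finset V) (hF : F ∈ Δ) (hfree : HasFreeVertex Δ F)
    (u : Finset V) (hu : u ⊆ vertexSet Δ \ F)
    (hcard : (vertexSet (induced (gammaOf Δ F) u)).card = u.card) :
    (vertexSet (induced Δ (F ∪ u))).card = u.card + F.card :=
  card_vertexSet_induced_union_general Δ F hF u hu hcard

end FacetPaper
end

section
/- Let S = k[a,b,c,d,e] over a field k and I = (ab, bc, cd, de). Then β_{3,5}(S/I) ≠ 0 and β_{2,3}(S/(bc,cd)) ≠ 0, but β_{1,4}(S/(ab,de)) = 0; in particular, the element m_u = bcd of LCM(I), whose only complement in LCM(I) is m_v = abde, has a complement supporting no nonzero first Betti number in homological degree 1 and internal degree 4. -/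
namespace FacetPaper

variable (k : Type*) [Field k]
variable {V : Type*} [DecidableEq V] [LinearOrder V]

/-! Every strand of the Taylor complex has the subsets `σ` of generators with `|σ| = i` and
`lcm σ = u` as a basis. If each of them is a cycle, which happens when removing any generator
from `σ` lowers its lcm, then `β_{i,u}` is at least the number of such `σ` minus the number in
degree `i + 1`; if there are none, `β_{i,u} = 0`. For the path `ab, bc, cd, de` this leaves
counting subsets of at most four generators. -/

def taylorFaces (Δ : Finset (Finset V)) (i : ℕ) (u : Finset V) : Finset (Finset (Finset V)) :=
  Δ.powerset.filter fun σ => σ.card = i ∧ σ.sup id = u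

section TaylorStrand

variable {k}
variable {Δ : Finset (Finset V)} {i : ℕ} {u : Finset V}

theorem taylorDiff_single (σ : Finset (Finset V)) :
    taylorDiff k (Finsupp.single σ (1 : k)) = taylorD k σ := by
  rw [taylorDiff, Finsupp.lsum_single, LinearMap.toSpanSingleton_apply, one_smul]

theorem taylorD_eq_zero_of_sup_erase_ne {σ : Finset (Finset V)}
    (h : ∀ F ∈ σ, (σ.erase F).sup id ≠ σ.sup id) : taylorD k σ = 0 :=
  Finset.sum_eq_zero fun F hF => if_neg (h F hF)

omit [LinearOrder V] in
theorem strand_eq_span_range :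
    strand k Δ i u = Submodule.span k
      (Set.range fun σ : taylorFaces Δ i u => Finsupp.single (σ : Finset (Finset V)) (1 : k)) := by
  rw [strand]
  congr 1
  ext x
  simp only [taylorFaces, Set.mem_ofPred_eq, Set.mem_range, Subtype.exists, Finset.mem_filter,
    Finset.mem_powerset]
  constructor
  · rintro ⟨σ, hσ, hcard, hsup, rfl⟩
    exact ⟨σ, ⟨hσ, hcard, hsup⟩, rfl⟩
  · rintro ⟨σ, ⟨hσ, hcard, hsup⟩, rfl⟩
    exact ⟨σ, hσ, hcard, hsup, rfl⟩

instance : FiniteDimensional k (strand k Δ i u) := by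
  rw [strand_eq_span_range]
  exact FiniteDimensional.span_of_finite k (Set.finite_range _)

instance : FiniteDimensional k (taylorBoundaries k Δ i u) :=
  Module.Finite.map _ _

omit [LinearOrder V] in
variable (k) in
theorem finrank_strand : Module.finrank k ↥(strand k Δ i u) = (taylorFaces Δ i u).card := by
  rw [strand_eq_span_range, finrank_span_eq_card, Fintype.card_coe]
  exact (Finsupp.linearIndependent_single_one k _).comp _ Subtype.val_injective

theorem card_taylorFaces_sub_le_multigradedBetti
    (hcycle : ∀ σ ∈ taylorFaces Δ i u, taylorD k σ = 0) :
    (taylorFaces Δ i u).card - (taylorFaces Δ (i + 1) u).card ≤ multigradedBetti k Δ i u := by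
  have hcycles : taylorCycles k Δ i u = strand k Δ i u := by
    refine inf_eq_right.mpr ?_
    rw [strand_eq_span_range, Submodule.span_le]
    rintro _ ⟨σ, rfl⟩
    exact (taylorDiff_single σ.1).trans (hcycle σ σ.2)
  have hboundaries : Module.finrank k ↥(taylorBoundaries k Δ i u ⊓ taylorCycles k Δ i u) ≤
      (taylorFaces Δ (i + 1) u).card :=
    calc _ ≤ Module.finrank k ↥(taylorBoundaries k Δ i u) := Submodule.finrank_mono inf_le_left
      _ ≤ Module.finrank k ↥(strand k Δ (i + 1) u) := Submodule.finrank_map_le _ _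
      _ = _ := finrank_strand k
  rw [hcycles] at hboundaries
  rw [multigradedBetti, hcycles, finrank_strand k]
  omega

theorem multigradedBetti_ne_zero_of_sup_erase_ne
    (hcycle : ∀ σ ∈ taylorFaces Δ i u, ∀ F ∈ σ, (σ.erase F).sup id ≠ σ.sup id)
    (hcard : (taylorFaces Δ (i + 1) u).card < (taylorFaces Δ i u).card) :
    multigradedBetti k Δ i u ≠ 0 := by
  have := card_taylorFaces_sub_le_multigradedBetti (k := k)
    fun σ hσ => taylorD_eq_zero_of_sup_erase_ne (hcycle σ hσ)
  omega

theorem multigradedBetti_eq_zero_of_taylorFaces_eq_empty (h : taylorFaces Δ i u = ∅) :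
    multigradedBetti k Δ i u = 0 := by
  have : Module.finrank k ↥(taylorCycles k Δ i u) ≤ 0 :=
    calc _ ≤ Module.finrank k ↥(strand k Δ i u) := Submodule.finrank_mono inf_le_right
      _ = 0 := by rw [finrank_strand k, h, Finset.card_empty]
  rw [multigradedBetti]
  omega

theorem gradedBetti_ne_zero_of_mem_powersetCard {j : ℕ}
    (hu : u ∈ (vertexSet Δ).powersetCard j) (h : multigradedBetti k Δ i u ≠ 0) :
    gradedBetti k Δ i j ≠ 0 :=
  fun hzero => h (Finset.sum_eq_zero_iff.mp hzero u hu)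

end TaylorStrand

abbrev pathFacets : Finset (Finset (Fin 5)) := {{0,1},{1,2},{2,3},{3,4}}

/-- The cycles `{ab, bc, de}` and `{ab, cd, de}` outnumber the single basis element one
degree higher. -/
theorem gradedBetti_pathFacets_three_five_ne_zero : gradedBetti k pathFacets 3 5 ≠ 0 := by
  have faces : taylorFaces pathFacets 3 Finset.univ =
      {{{0,1},{1,2},{3,4}}, {{0,1},{2,3},{3,4}}} := by decide
  have facesSucc : taylorFaces pathFacets (3 + 1) Finset.univ = {pathFacets} := by decide
  refine gradedBetti_ne_zero_of_mem_powersetCard (u := Finset.univ) (by decide)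
    (multigradedBetti_ne_zero_of_sup_erase_ne ?_ (by rw [faces, facesSucc]; decide))
  rw [faces]
  simp only [Finset.mem_insert, Finset.mem_singleton, forall_eq_or_imp, forall_eq]
  decide

theorem gradedBetti_bc_cd_two_three_ne_zero :
    gradedBetti k ({{1,2},{2,3}} : Finset (Finset (Fin 5))) 2 3 ≠ 0 := by
  have faces : taylorFaces ({{1,2},{2,3}} : Finset (Finset (Fin 5))) 2 {1,2,3} =
      {{{1,2},{2,3}}} := by decide
  have facesSucc : taylorFaces ({{1,2},{2,3}} : Finset (Finset (Fin 5))) (2 + 1) {1,2,3} = ∅ := by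
    decide
  refine gradedBetti_ne_zero_of_mem_powersetCard (u := {1,2,3}) (by decide)
    (multigradedBetti_ne_zero_of_sup_erase_ne ?_ (by rw [faces, facesSucc]; decide))
  rw [faces]
  simp only [Finset.mem_singleton, forall_eq]
  decide

theorem gradedBetti_ab_de_one_four_eq_zero :
    gradedBetti k ({{0,1},{3,4}} : Finset (Finset (Fin 5))) 1 4 = 0 := by
  have degree : (vertexSet ({{0,1},{3,4}} : Finset (Finset (Fin 5)))).powersetCard 4 =
      {{0,1,3,4}} := by decide
  rw [gradedBetti, degree, Finset.sum_singleton]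
  exact multigradedBetti_eq_zero_of_taylorFaces_eq_empty (by decide)

theorem eq_of_lcmComplements_pathFacets {w : Finset (Fin 5)} (hw : MemLcmLattice pathFacets w)
    (hne : w ≠ ∅) (hne_top : w ≠ vertexSet pathFacets)
    (hunion : {1,2,3} ∪ w = vertexSet pathFacets) : w = {0,1,3,4} := by
  obtain ⟨A, hA, rfl⟩ := hw
  have complements : ((pathFacets.powerset.filter fun A => A.sup id ≠ ∅ ∧
      A.sup id ≠ vertexSet pathFacets ∧ {1,2,3} ∪ A.sup id = vertexSet pathFacets).image
        fun A => A.sup id) = {{0,1,3,4}} := by decide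
  rw [← Finset.mem_singleton, ← complements]
  exact Finset.mem_image_of_mem _
    (Finset.mem_filter.mpr ⟨Finset.mem_powerset.mpr hA, hne, hne_top, hunion⟩)

/-- For `S = k[a,b,c,d,e]` (variables indexed by `Fin 5`) and
`I = (ab, bc, cd, de)`, the facet complex of `I` is `{{0,1},{1,2},{2,3},{3,4}}`.
Then `β_{3,5}(S/I) ≠ 0` and `β_{2,3}(S/(bc,cd)) ≠ 0` but `β_{1,4}(S/(ab,de)) = 0`;
moreover the only complement of `m_u = bcd` (support `{1,2,3}`) in `LCM(I)` is
`m_v = abde` (support `{0,1,3,4}`), so `m_u` has a complement supporting no nonzero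
Betti number in homological degree `1` and internal degree `4`. -/
theorem example_path_complement :
    gradedBetti k ({{0,1},{1,2},{2,3},{3,4}} : Finset (Finset (Fin 5))) 3 5 ≠ 0 ∧
    gradedBetti k ({{1,2},{2,3}} : Finset (Finset (Fin 5))) 2 3 ≠ 0 ∧
    gradedBetti k ({{0,1},{3,4}} : Finset (Finset (Fin 5))) 1 4 = 0 ∧
    LcmComplements ({{0,1},{1,2},{2,3},{3,4}} : Finset (Finset (Fin 5)))
      ({1,2,3} : Finset (Fin 5)) ({0,1,3,4} : Finset (Fin 5)) ∧
    (∀ w : Finset (Fin 5),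
      MemLcmLattice ({{0,1},{1,2},{2,3},{3,4}} : Finset (Finset (Fin 5))) w →
      w ≠ ∅ →
      w ≠ vertexSet ({{0,1},{1,2},{2,3},{3,4}} : Finset (Finset (Fin 5))) →
      LcmComplements ({{0,1},{1,2},{2,3},{3,4}} : Finset (Finset (Fin 5)))
        ({1,2,3} : Finset (Fin 5)) w →
      w = ({0,1,3,4} : Finset (Fin 5))) := by
  refine ⟨gradedBetti_pathFacets_three_five_ne_zero k, gradedBetti_bc_cd_two_three_ne_zero k,
    gradedBetti_ab_de_one_four_eq_zero k, ⟨by decide, by decide⟩,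
    fun _ hw hne hne_top hcompl => eq_of_lcmComplements_pathFacets hw hne hne_top hcompl.1⟩

end FacetPaper
end

section
/- Every leaf of a simplicial complex contains a free vertex: if F is a leaf of a simplicial complex Δ, then there exists a vertex of F that belongs to no facet of Δ other than F. -/
namespace FacetPaper

variable (k : Type*) [Field k]
variable {V : Type*} [DecidableEq V] [LinearOrder V]

/-! If a leaf `F` with joint `G` had no free vertex, each of its vertices would lie in some
`F ∩ H` with `H ≠ F`, hence in `G`; so `F ⊆ G`, impossible for two distinct facets. A leaf that is
the only facet is nonempty, and any of its vertices is free. -/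

omit [DecidableEq V] [LinearOrder V] in
theorem hasFreeVertex_singleton {F : Finset V} (hF : F.Nonempty) : HasFreeVertex {F} F :=
  let ⟨x, hx⟩ := hF
  ⟨x, hx, fun _ hG _ => Finset.mem_singleton.mp hG⟩

omit [LinearOrder V] in
theorem subset_of_not_hasFreeVertex {Δ : Finset (Finset V)} {F G : Finset V}
    (hjoint : ∀ H ∈ Δ, H ≠ F → F ∩ H ⊆ G) (h : ¬ HasFreeVertex Δ F) : F ⊆ G := by
  intro x hxF
  obtain ⟨H, hHΔ, hxH, hHF⟩ : ∃ H ∈ Δ, x ∈ H ∧ H ≠ F := by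
    by_contra! hfree
    exact h ⟨x, hxF, hfree⟩
  exact hjoint H hHΔ hHF (Finset.mem_inter.mpr ⟨hxF, hxH⟩)

/-- Every leaf of a simplicial complex contains a free vertex:
a vertex belonging to no facet other than the leaf itself. -/
theorem exists_freeVertex_of_isLeaf
    (Δ : Finset (Finset V)) (hfacet : IsAntichain (· ⊆ ·) (Δ : Set (Finset V)))
    (hne : ∅ ∉ Δ) (F : Finset V) (hF : IsLeaf Δ F) :
    ∃ x ∈ F, ∀ G ∈ Δ, x ∈ G → G = F := by
  obtain ⟨hFΔ, rfl | ⟨G, hGΔ, hGF, hjoint⟩⟩ := hF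
  · exact hasFreeVertex_singleton (Finset.nonempty_iff_ne_empty.mpr fun h => hne (h ▸ hFΔ))
  · by_contra h
    exact hfacet hFΔ hGΔ hGF.symm (subset_of_not_hasFreeVertex hjoint h)

end FacetPaper
end
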